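/- arXiv:2510.22701 — 2 statements merged into one kernel-verified Lean document; each statement's English description precedes it below -/
import Mathlib

section
/- There is a constant C > 0, independent of n, k and a, such that for all n ≥ 1, all 0 ≤ k ≤ n − 1 and all 0 < a ≤ k^{1/6}: P(Y_{n−k} ≥ E[Y_{n−k}] + a (k + 1/2)^{−3/2}) ≤ C e^{−(3/2) a²} and P(Y_{n−k} ≤ E[Y_{n−k}] − a (k + 1/2)^{−3/2}) ≤ C e^{−(3/2) a²}; consequently, for 1 ≤ k ≤ n and 0 < a ≤ (n − k)^{1/6}, P(|Y_k − E[Y_k]| ≥ 2^{3/2} a (n − k + 1)^{−3/2}) ≤ 2C e^{−(3/2) a²}. -/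
/-!
`Y_{n-k}` is a sum of independent exponential variables with rates `(n - i + 1)² ≥ (k + 1)²`,
and `∑ rᵢ⁻² ≤ ∑_{j > k} j⁻⁴ ≤ 1 / (3 (k + 1/2)³)` by comparing `j⁻⁴` with a telescoping
difference. Write `k + 1/2 = M⁶`, so the deviation is `a / M⁹`. The Chernoff bound at
`t = ±3 a M⁹` (the minimiser of `-t a / M⁹ + t² ∑ rᵢ⁻² / 2`), combined with
`e^{-u} / (1 - u) ≤ e^{u²/2 + 2|u|³}` for `|u| ≤ 1/4`, gives the exponent `-3a² + 3a²/2 + 18`,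
the cubic terms being bounded because `a ≤ M`. When `a² ≤ 12` the bound `e^{18 - 3a²/2}`
exceeds `1`, and otherwise `M² ≥ 12` guarantees `|t| ≤ rᵢ / 4`. The two-sided bound is a union
bound, using `(x + 1/2)^{-3/2} ≤ 2^{3/2} (x + 1)^{-3/2}`.
-/

open MeasureTheory ProbabilityTheory Real Set

namespace Real

lemma one_le_exp_mul_one_sub {u : ℝ} (h0 : 0 ≤ u) (h1 : u ≤ 1 / 4) :
    1 ≤ exp (u + u ^ 2 / 2 + 2 * u ^ 3) * (1 - u) := by
  have hx := quadratic_le_exp_of_nonneg (x := u + u ^ 2 / 2 + 2 * u ^ 3) (by positivity)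
  have hpoly : 1 ≤ (1 + (u + u ^ 2 / 2 + 2 * u ^ 3) + (u + u ^ 2 / 2 + 2 * u ^ 3) ^ 2 / 2)
      * (1 - u) := by
    nlinarith [pow_nonneg h0 2, pow_nonneg h0 3, pow_nonneg h0 4, pow_nonneg h0 5,
      pow_nonneg h0 6]
  nlinarith

lemma exp_sub_sq_div_two_le_one_add {v : ℝ} (h0 : 0 ≤ v) (h1 : v ≤ 1) :
    exp (v - v ^ 2 / 2) ≤ 1 + v := by
  have hx0 : 0 ≤ v - v ^ 2 / 2 := by nlinarith
  have h := exp_bound' hx0 (by nlinarith) (n := 3) (by norm_num)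
  norm_num [Finset.sum_range_succ, Nat.factorial] at h
  nlinarith [pow_nonneg h0 2, pow_nonneg h0 3, pow_nonneg h0 4, pow_nonneg h0 5,
    pow_nonneg h0 6, sq_nonneg (v - 1)]

lemma exp_neg_div_one_sub_le {u : ℝ} (hu : |u| ≤ 1 / 4) :
    exp (-u) / (1 - u) ≤ exp (u ^ 2 / 2 + 2 * |u| ^ 3) := by
  have h1u : 0 < 1 - u := by linarith [le_abs_self u]
  rw [div_le_iff₀ h1u]
  rcases le_total 0 u with hu0 | hu0
  · rw [abs_of_nonneg hu0] at hu ⊢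
    calc exp (-u) = exp (-u) * 1 := (mul_one _).symm
      _ ≤ exp (-u) * (exp (u + u ^ 2 / 2 + 2 * u ^ 3) * (1 - u)) := by
        gcongr; exact one_le_exp_mul_one_sub hu0 hu
      _ = exp (u ^ 2 / 2 + 2 * u ^ 3) * (1 - u) := by
        rw [← mul_assoc, ← exp_add]; ring_nf
  · rw [abs_of_nonpos hu0] at hu ⊢
    calc exp (-u) = exp (u ^ 2 / 2) * exp (-u - u ^ 2 / 2) := by rw [← exp_add]; ring_nf
      _ ≤ exp (u ^ 2 / 2 + 2 * (-u) ^ 3) * (1 - u) := by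
        gcongr
        · nlinarith
        · have := exp_sub_sq_div_two_le_one_add (v := -u) (by linarith) (by linarith)
          ring_nf at this ⊢; linarith

end Real

lemma one_div_pow_four_le_sub {j : ℝ} (hj : 1 ≤ j) :
    1 / j ^ 4 ≤ 1 / (3 * (j - 1 / 2) ^ 3) - 1 / (3 * (j + 1 / 2) ^ 3) := by
  have h1 : 0 < j - 1 / 2 := by linarith
  rw [div_sub_div _ _ (by positivity) (by positivity),
    div_le_div_iff₀ (by positivity) (by positivity)]
  nlinarith [pow_pos h1 3, pow_pos (by linarith : (0:ℝ) < j) 2, sq_nonneg j]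

lemma sum_range_one_div_sub_pow_four_le {n m : ℕ} (hm : m ≤ n) :
    ∑ i ∈ Finset.range m, 1 / ((n - i : ℕ) : ℝ) ^ 4
      ≤ 1 / (3 * (((n - m : ℕ) : ℝ) + 1 / 2) ^ 3) := by
  induction m with
  | zero => simp; positivity
  | succ m ih =>
    have hnm : n - m = (n - (m + 1)) + 1 := by omega
    have key := one_div_pow_four_le_sub (j := ((n - m : ℕ) : ℝ))
      (by exact_mod_cast (by omega : 1 ≤ n - m))
    have hsum := ih (by omega)
    rw [Finset.sum_range_succ, hnm, Nat.cast_add_one]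
    rw [hnm, Nat.cast_add_one] at key hsum
    rw [show ((n - (m + 1) : ℕ) : ℝ) + 1 - 1 / 2 = ((n - (m + 1) : ℕ) : ℝ) + 1 / 2 by ring] at key
    linarith

lemma sum_Icc_one_eq_sum_fin {M : Type*} [AddCommMonoid M] (m : ℕ) (f : ℕ → M) :
    ∑ i ∈ Finset.Icc 1 m, f i = ∑ j : Fin m, f (j + 1) := by
  rw [Fin.sum_univ_eq_sum_range (fun j => f (j + 1)), Finset.range_eq_Ico,
    Finset.sum_Ico_add' f 0 m 1]
  rfl

lemma rpow_neg_le_two_rpow_mul_rpow_neg {x y p : ℝ} (hy : 0 < y) (hyx : y ≤ 2 * x)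
    (hp : 0 ≤ p) : x ^ (-p) ≤ 2 ^ p * y ^ (-p) := by
  calc x ^ (-p) ≤ (y / 2) ^ (-p) :=
        rpow_le_rpow_of_nonpos (by positivity) (by linarith) (by linarith)
    _ = 2 ^ p * y ^ (-p) := by
      rw [rpow_neg (by positivity), div_rpow hy.le zero_le_two, inv_div, rpow_neg hy.le,
        div_eq_mul_inv]

lemma chernoff_exponent_le {ι : Type*} {s : Finset ι} {r : ι → ℝ} {a M : ℝ} (ha : 0 < a)
    (haM : a ≤ M) (hr : ∀ i ∈ s, M ^ 12 ≤ r i) (hsum : ∑ i ∈ s, 1 / r i ^ 2 ≤ 1 / (3 * M ^ 18)) :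
    -(3 * a * M ^ 9 * (a / M ^ 9))
        + ∑ i ∈ s, ((3 * a * M ^ 9 / r i) ^ 2 / 2 + 2 * |3 * a * M ^ 9 / r i| ^ 3)
      ≤ 18 - 3 / 2 * a ^ 2 := by
  have hM : 0 < M := ha.trans_le haM
  have hr0 : ∀ i ∈ s, 0 < r i := fun i hi => (pow_pos hM 12).trans_le (hr i hi)
  set T := 3 * a * M ^ 9
  have hu0 : ∀ i ∈ s, 0 ≤ T / r i := fun i hi => div_nonneg (by positivity) (hr0 i hi).le
  have hu : ∀ i ∈ s, T / r i ≤ 3 * a / M ^ 3 := fun i hi => by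
    calc T / r i ≤ T / M ^ 12 := div_le_div_of_nonneg_left (by positivity) (by positivity) (hr i hi)
      _ = 3 * a / M ^ 3 := by field_simp; ring
  have hsq : ∑ i ∈ s, (T / r i) ^ 2 ≤ 3 * a ^ 2 := by
    calc ∑ i ∈ s, (T / r i) ^ 2 = T ^ 2 * ∑ i ∈ s, 1 / r i ^ 2 := by
          rw [Finset.mul_sum]; exact Finset.sum_congr rfl fun i _ => by ring
      _ ≤ T ^ 2 * (1 / (3 * M ^ 18)) := by gcongr
      _ = 3 * a ^ 2 := by field_simp; ring
  have hcube : ∑ i ∈ s, |T / r i| ^ 3 ≤ 9 := by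
    calc ∑ i ∈ s, |T / r i| ^ 3 ≤ ∑ i ∈ s, 3 * a / M ^ 3 * (T / r i) ^ 2 := by
          refine Finset.sum_le_sum fun i hi => ?_
          rw [abs_of_nonneg (hu0 i hi), pow_succ']
          exact mul_le_mul_of_nonneg_right (hu i hi) (sq_nonneg _)
      _ = 3 * a / M ^ 3 * ∑ i ∈ s, (T / r i) ^ 2 := by rw [Finset.mul_sum]
      _ ≤ 3 * a / M ^ 3 * (3 * a ^ 2) := by gcongr
      _ ≤ 9 := by
          rw [div_mul_eq_mul_div, div_le_iff₀ (by positivity)]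
          nlinarith [pow_le_pow_left₀ ha.le haM 3]
  have hTδ : T * (a / M ^ 9) = 3 * a ^ 2 := by field_simp; ring
  rw [hTδ, Finset.sum_add_distrib, ← Finset.sum_div, ← Finset.mul_sum]
  linarith

namespace ProbabilityTheory

lemma integral_expMeasure {r : ℝ} (hr : 0 ≤ r) (g : ℝ → ℝ) :
    ∫ x, g x ∂expMeasure r = ∫ x in Ioi 0, r * exp (-(r * x)) * g x := by
  change ∫ x, g x ∂volume.withDensity (exponentialPDF r) = _
  have hpdf : Measurable (exponentialPDF r) := (measurable_exponentialPDFReal r).ennreal_ofReal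
  rw [integral_withDensity_eq_integral_toReal_smul hpdf
      (ae_of_all _ fun _ => ENNReal.ofReal_lt_top),
    ← integral_Ici_eq_integral_Ioi, ← integral_indicator measurableSet_Ici]
  congr 1 with x
  by_cases hx : 0 ≤ x <;> simp [exponentialPDF_eq, hx, indicator, hr, (exp_pos _).le]

lemma integral_exp_mul_expMeasure {r t : ℝ} (hr : 0 < r) (ht : t < r) :
    ∫ x, exp (t * x) ∂expMeasure r = r / (r - t) := by
  have h : ∀ x, r * exp (-(r * x)) * exp (t * x) = r * exp ((t - r) * x) := fun x => by
    rw [mul_assoc, ← exp_add]; ring_nf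
  simp_rw [integral_expMeasure hr.le, h, integral_const_mul,
    integral_exp_mul_Ioi (by linarith : t - r < 0)]
  rw [mul_zero, exp_zero, neg_div, ← div_neg, neg_sub]
  ring

lemma integral_id_expMeasure {r : ℝ} (hr : 0 < r) : ∫ x, x ∂expMeasure r = 1 / r := by
  have h := integral_rpow_mul_exp_neg_mul_Ioi two_pos hr
  norm_num at h
  simp_rw [integral_expMeasure hr.le, mul_assoc, mul_comm (exp _), integral_const_mul, h]
  field_simp

section ExponentialLaw

variable {Ω : Type*} [MeasurableSpace Ω] {μ : Measure Ω} {X : Ω → ℝ} {r t : ℝ}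

lemma mgf_of_map_eq_expMeasure (hX : AEMeasurable X μ) (hlaw : μ.map X = expMeasure r)
    (hr : 0 < r) (ht : t < r) : mgf X μ t = r / (r - t) := by
  rw [← mgf_id_map hX, hlaw, mgf]
  exact integral_exp_mul_expMeasure hr ht

lemma integrable_exp_mul_of_map_eq_expMeasure (hX : AEMeasurable X μ)
    (hlaw : μ.map X = expMeasure r) (hr : 0 < r) (ht : t < r) :
    Integrable (fun ω => exp (t * X ω)) μ :=
  .of_integral_ne_zero <| by
    rw [← mgf, mgf_of_map_eq_expMeasure hX hlaw hr ht]
    exact (div_pos hr (sub_pos.mpr ht)).ne'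

lemma integral_of_map_eq_expMeasure (hX : AEMeasurable X μ) (hlaw : μ.map X = expMeasure r)
    (hr : 0 < r) : μ[X] = 1 / r := by
  rw [← integral_id_expMeasure hr, ← hlaw, integral_map hX (f := fun x => x) (by fun_prop)]

lemma integrable_of_map_eq_expMeasure (hX : AEMeasurable X μ) (hlaw : μ.map X = expMeasure r)
    (hr : 0 < r) : Integrable X μ :=
  .of_integral_ne_zero <| by
    rw [integral_of_map_eq_expMeasure hX hlaw hr]
    exact (one_div_pos.mpr hr).ne'

end ExponentialLaw

section SumOfExponentials

variable {Ω ι : Type*} [MeasurableSpace Ω] {μ : Measure Ω} {g : ι → Ω → ℝ} {s : Finset ι}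
  {r : ι → ℝ} {t : ℝ}

lemma integral_sum_of_map_eq_expMeasure (hmeas : ∀ i, Measurable (g i))
    (hlaw : ∀ i ∈ s, μ.map (g i) = expMeasure (r i)) (hr : ∀ i ∈ s, 0 < r i) :
    ∫ ω, ∑ i ∈ s, g i ω ∂μ = ∑ i ∈ s, 1 / r i := by
  rw [integral_finsetSum s fun i hi =>
    integrable_of_map_eq_expMeasure (hmeas i).aemeasurable (hlaw i hi) (hr i hi)]
  exact Finset.sum_congr rfl fun i hi =>
    integral_of_map_eq_expMeasure (hmeas i).aemeasurable (hlaw i hi) (hr i hi)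

lemma integrable_exp_mul_sum_sub_of_map_eq_expMeasure (hmeas : ∀ i, Measurable (g i))
    (hindep : iIndepFun g μ) (hlaw : ∀ i ∈ s, μ.map (g i) = expMeasure (r i))
    (hr : ∀ i ∈ s, 0 < r i) (ht : ∀ i ∈ s, t < r i) (c : ℝ) :
    Integrable (fun ω => exp (t * (∑ i ∈ s, g i ω - c))) μ := by
  have := hindep.isProbabilityMeasure
  have h := (hindep.integrable_exp_mul_sum hmeas fun i hi =>
    integrable_exp_mul_of_map_eq_expMeasure (hmeas i).aemeasurable (hlaw i hi) (hr i hi)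
      (ht i hi)).mul_const (exp (-(t * c)))
  refine h.congr (ae_of_all _ fun ω => ?_)
  simp only [Finset.sum_apply, ← exp_add]
  ring_nf

lemma mgf_sum_sub_sum_inv_le (hmeas : ∀ i, Measurable (g i)) (hindep : iIndepFun g μ)
    (hlaw : ∀ i ∈ s, μ.map (g i) = expMeasure (r i)) (hr : ∀ i ∈ s, 0 < r i)
    (ht : ∀ i ∈ s, |t| ≤ r i / 4) :
    mgf (fun ω => ∑ i ∈ s, g i ω - ∑ i ∈ s, 1 / r i) μ t
      ≤ exp (∑ i ∈ s, ((t / r i) ^ 2 / 2 + 2 * |t / r i| ^ 3)) := by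
  have htr : ∀ i ∈ s, t < r i := fun i hi => by
    linarith [le_abs_self t, ht i hi, hr i hi]
  have hfactor : ∀ i ∈ s, exp (-(t / r i)) * mgf (g i) μ t
      = exp (-(t / r i)) / (1 - t / r i) := fun i hi => by
    rw [mgf_of_map_eq_expMeasure (hmeas i).aemeasurable (hlaw i hi) (hr i hi) (htr i hi),
      one_sub_div (hr i hi).ne', div_div_eq_mul_div, mul_div_assoc]
  calc mgf (fun ω => ∑ i ∈ s, g i ω - ∑ i ∈ s, 1 / r i) μ t
      = ∏ i ∈ s, (exp (-(t / r i)) * mgf (g i) μ t) := by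
        simp_rw [sub_eq_add_neg, mgf_add_const, ← Finset.sum_apply, hindep.mgf_sum hmeas,
          Finset.prod_mul_distrib, ← exp_sum, mul_comm]
        congr 2
        rw [← Finset.sum_neg_distrib, Finset.mul_sum]
        exact Finset.sum_congr rfl fun i _ => by ring
    _ ≤ ∏ i ∈ s, exp ((t / r i) ^ 2 / 2 + 2 * |t / r i| ^ 3) := by
        refine Finset.prod_le_prod (fun i hi => ?_) fun i hi => ?_
        · exact mul_nonneg (exp_pos _).le mgf_nonneg
        · rw [hfactor i hi]
          refine exp_neg_div_one_sub_le ?_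
          rw [abs_div, abs_of_pos (hr i hi), div_le_iff₀ (hr i hi)]
          linarith [ht i hi]
    _ = _ := (exp_sum _ _).symm

lemma measureReal_integral_add_le_sum_le (hmeas : ∀ i, Measurable (g i))
    (hindep : iIndepFun g μ) (hlaw : ∀ i ∈ s, μ.map (g i) = expMeasure (r i))
    (hr : ∀ i ∈ s, 0 < r i) (ht0 : 0 ≤ t) (ht : ∀ i ∈ s, t ≤ r i / 4) (δ : ℝ) :
    μ.real {ω | ∫ ω', ∑ i ∈ s, g i ω' ∂μ + δ ≤ ∑ i ∈ s, g i ω}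
      ≤ exp (-(t * δ) + ∑ i ∈ s, ((t / r i) ^ 2 / 2 + 2 * |t / r i| ^ 3)) := by
  have := hindep.isProbabilityMeasure
  have habs : ∀ i ∈ s, |t| ≤ r i / 4 := fun i hi => by rw [abs_of_nonneg ht0]; exact ht i hi
  rw [integral_sum_of_map_eq_expMeasure hmeas hlaw hr, exp_add]
  calc μ.real {ω | ∑ i ∈ s, 1 / r i + δ ≤ ∑ i ∈ s, g i ω}
      = μ.real {ω | δ ≤ ∑ i ∈ s, g i ω - ∑ i ∈ s, 1 / r i} := by
        simp_rw [le_sub_iff_add_le']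
    _ ≤ exp (-t * δ) * mgf (fun ω => ∑ i ∈ s, g i ω - ∑ i ∈ s, 1 / r i) μ t :=
        measure_ge_le_exp_mul_mgf δ ht0
          (integrable_exp_mul_sum_sub_of_map_eq_expMeasure hmeas hindep hlaw hr
            (fun i hi => by linarith [ht i hi, hr i hi]) _)
    _ ≤ _ := by
        rw [neg_mul]
        gcongr
        exact mgf_sum_sub_sum_inv_le hmeas hindep hlaw hr habs

lemma measureReal_sum_le_integral_sub_le (hmeas : ∀ i, Measurable (g i))
    (hindep : iIndepFun g μ) (hlaw : ∀ i ∈ s, μ.map (g i) = expMeasure (r i))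
    (hr : ∀ i ∈ s, 0 < r i) (ht0 : 0 ≤ t) (ht : ∀ i ∈ s, t ≤ r i / 4) (δ : ℝ) :
    μ.real {ω | ∑ i ∈ s, g i ω ≤ ∫ ω', ∑ i ∈ s, g i ω' ∂μ - δ}
      ≤ exp (-(t * δ) + ∑ i ∈ s, ((t / r i) ^ 2 / 2 + 2 * |t / r i| ^ 3)) := by
  have := hindep.isProbabilityMeasure
  have habs : ∀ i ∈ s, |-t| ≤ r i / 4 := fun i hi => by
    rw [abs_neg, abs_of_nonneg ht0]; exact ht i hi
  rw [integral_sum_of_map_eq_expMeasure hmeas hlaw hr, exp_add]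
  calc μ.real {ω | ∑ i ∈ s, g i ω ≤ ∑ i ∈ s, 1 / r i - δ}
      = μ.real {ω | ∑ i ∈ s, g i ω - ∑ i ∈ s, 1 / r i ≤ -δ} := by
        simp_rw [sub_le_iff_le_add', ← sub_eq_add_neg]
    _ ≤ exp (- -t * -δ) * mgf (fun ω => ∑ i ∈ s, g i ω - ∑ i ∈ s, 1 / r i) μ (-t) :=
        measure_le_le_exp_mul_mgf (-δ) (neg_nonpos.mpr ht0)
          (integrable_exp_mul_sum_sub_of_map_eq_expMeasure hmeas hindep hlaw hr
            (fun i hi => by linarith [ht i hi, hr i hi]) _)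
    _ ≤ _ := by
        rw [neg_neg, mul_neg, ← neg_mul]
        gcongr
        simpa only [neg_div, neg_sq, abs_neg] using
          mgf_sum_sub_sum_inv_le hmeas hindep hlaw hr habs

theorem tails_sum_of_map_eq_expMeasure (hmeas : ∀ i, Measurable (g i)) (hindep : iIndepFun g μ)
    (hlaw : ∀ i ∈ s, μ.map (g i) = expMeasure (r i)) {a M : ℝ} (ha : 0 < a) (haM : a ≤ M)
    (hr : ∀ i ∈ s, M ^ 12 ≤ r i) (hsum : ∑ i ∈ s, 1 / r i ^ 2 ≤ 1 / (3 * M ^ 18)) :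
    μ.real {ω | ∫ ω', ∑ i ∈ s, g i ω' ∂μ + a / M ^ 9 ≤ ∑ i ∈ s, g i ω}
        ≤ exp 18 * exp (-(3 / 2) * a ^ 2) ∧
      μ.real {ω | ∑ i ∈ s, g i ω ≤ ∫ ω', ∑ i ∈ s, g i ω' ∂μ - a / M ^ 9}
        ≤ exp 18 * exp (-(3 / 2) * a ^ 2) := by
  have := hindep.isProbabilityMeasure
  rw [← exp_add, neg_mul, ← sub_eq_add_neg]
  by_cases ha12 : a ^ 2 ≤ 12
  · have hone : 1 ≤ exp (18 - 3 / 2 * a ^ 2) := one_le_exp (by linarith)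
    exact ⟨measureReal_le_one.trans hone, measureReal_le_one.trans hone⟩
  have hM : 0 < M := ha.trans_le haM
  have hr0 : ∀ i ∈ s, 0 < r i := fun i hi => (pow_pos hM 12).trans_le (hr i hi)
  have ht : ∀ i ∈ s, 3 * a * M ^ 9 ≤ r i / 4 := fun i hi => by
    have hM12 : 12 ≤ M ^ 2 := by nlinarith [pow_le_pow_left₀ ha.le haM 2]
    calc 3 * a * M ^ 9 ≤ 3 * M * M ^ 9 := by gcongr
      _ ≤ M ^ 2 * M ^ 10 / 4 := by nlinarith [pow_pos hM 10]
      _ ≤ r i / 4 := by rw [← pow_add]; linarith [hr i hi]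
  exact ⟨(measureReal_integral_add_le_sum_le hmeas hindep hlaw hr0 (by positivity) ht _).trans
      (exp_le_exp.mpr (chernoff_exponent_le ha haM hr hsum)),
    (measureReal_sum_le_integral_sub_le hmeas hindep hlaw hr0 (by positivity) ht _).trans
      (exp_le_exp.mpr (chernoff_exponent_le ha haM hr hsum))⟩

end SumOfExponentials

end ProbabilityTheory

lemma measureReal_le_abs_sub_le {Ω : Type*} [MeasurableSpace Ω] {μ : Measure Ω}
    [IsFiniteMeasure μ] {Z : Ω → ℝ} {c δ ε : ℝ} (hδε : δ ≤ ε) :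
    μ.real {ω | ε ≤ |Z ω - c|} ≤ μ.real {ω | c + δ ≤ Z ω} + μ.real {ω | Z ω ≤ c - δ} := by
  refine (measureReal_mono fun ω hω => ?_).trans (measureReal_union_le _ _)
  rcases le_abs'.mp (hδε.trans hω) with h | h
  · exact Or.inr (show Z ω ≤ c - δ by linarith)
  · exact Or.inl (show c + δ ≤ Z ω by linarith)

theorem tails_sum_Icc_of_rates_sq {Ω : Type*} [MeasurableSpace Ω] {μ : Measure Ω} {n k : ℕ}
    {X : ℕ → Ω → ℝ} (hXmeas : ∀ i, Measurable (X i))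
    (hXindep : iIndepFun (fun i : Fin n => X (i + 1)) μ)
    (hXlaw : ∀ i, 1 ≤ i → i ≤ n → μ.map (X i) = expMeasure (((n - i + 1 : ℕ) : ℝ) ^ 2))
    (hk : k < n) {a : ℝ} (ha : 0 < a) (ha6 : a ≤ (k : ℝ) ^ ((1 : ℝ) / 6)) :
    μ.real {o | ∫ o', ∑ i ∈ Finset.Icc 1 (n - k), X i o' ∂μ
          + a * ((k : ℝ) + 1 / 2) ^ (-(3 : ℝ) / 2) ≤ ∑ i ∈ Finset.Icc 1 (n - k), X i o}
        ≤ exp 18 * exp (-(3 / 2) * a ^ 2) ∧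
      μ.real {o | ∑ i ∈ Finset.Icc 1 (n - k), X i o ≤ ∫ o', ∑ i ∈ Finset.Icc 1 (n - k), X i o' ∂μ
          - a * ((k : ℝ) + 1 / 2) ^ (-(3 : ℝ) / 2)}
        ≤ exp 18 * exp (-(3 / 2) * a ^ 2) := by
  have hK : (0 : ℝ) < k + 1 / 2 := by positivity
  set M := ((k : ℝ) + 1 / 2) ^ ((1 : ℝ) / 6)
  have hMpow : ∀ p : ℕ, M ^ p = ((k : ℝ) + 1 / 2) ^ ((p : ℝ) / 6) := fun p => by
    rw [← rpow_natCast, ← rpow_mul hK.le]; ring_nf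
  have hδ : a * ((k : ℝ) + 1 / 2) ^ (-(3 : ℝ) / 2) = a / M ^ 9 := by
    rw [hMpow, div_eq_mul_inv a, ← rpow_neg hK.le]; norm_num
  have haM : a ≤ M := ha6.trans (rpow_le_rpow k.cast_nonneg (by linarith) (by norm_num))
  have hr : ∀ j : Fin (n - k), M ^ 12 ≤ ((n - j : ℕ) : ℝ) ^ 2 := fun j => by
    have hj : (k : ℝ) + 1 ≤ ((n - j : ℕ) : ℝ) := by exact_mod_cast (by omega : k + 1 ≤ n - j)
    rw [hMpow, show ((12 : ℕ) : ℝ) / 6 = (2 : ℕ) by norm_num, rpow_natCast]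
    gcongr; linarith
  have hsum : ∑ j : Fin (n - k), 1 / (((n - j : ℕ) : ℝ) ^ 2) ^ 2 ≤ 1 / (3 * M ^ 18) := by
    rw [hMpow, show ((18 : ℕ) : ℝ) / 6 = (3 : ℕ) by norm_num, rpow_natCast]
    have h := sum_range_one_div_sub_pow_four_le (Nat.sub_le n k)
    rw [Nat.sub_sub_self hk.le, Finset.sum_range] at h
    simpa only [← pow_mul] using h
  have hlaw : ∀ j : Fin (n - k),
      μ.map (X (j + 1)) = expMeasure (((n - j : ℕ) : ℝ) ^ 2) := fun j => by
    rw [hXlaw (j + 1) (by omega) (by omega), show n - (j + 1) + 1 = n - j by omega]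
  simp_rw [sum_Icc_one_eq_sum_fin, hδ]
  exact tails_sum_of_map_eq_expMeasure (fun j => hXmeas _)
    (hXindep.precomp (Fin.castLE_injective (Nat.sub_le n k))) (fun j _ => hlaw j) ha haM
    (fun j _ => hr j) hsum

theorem stmt_6_general
    (Ω : ℕ → Type) [∀ n, MeasureSpace (Ω n)]
    (hprob : ∀ n, IsProbabilityMeasure (ℙ : Measure (Ω n)))
    (X : (n : ℕ) → ℕ → Ω n → ℝ)
    (hXmeas : ∀ n i, Measurable (X n i))
    (hXindep : ∀ n, iIndepFun (fun i : Fin n => X n (i + 1)) ℙ)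
    (hXlaw : ∀ n i, 1 ≤ i → i ≤ n →
      Measure.map (X n i) ℙ = expMeasure (((n - i + 1 : ℕ) : ℝ) ^ 2))
    (Y : (n : ℕ) → ℕ → Ω n → ℝ)
    (hY : ∀ n k o, Y n k o = ∑ i ∈ Finset.Icc 1 k, X n i o) :
    ∃ C : ℝ, 0 < C ∧
      (∀ n k : ℕ, ∀ a : ℝ, 1 ≤ n → k ≤ n - 1 → 0 < a → a ≤ (k : ℝ) ^ ((1:ℝ)/6) →
        ((ℙ : Measure (Ω n)) {o | (∫ o', Y n (n - k) o' ∂(ℙ : Measure (Ω n)))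
            + a * ((k : ℝ) + 1/2) ^ (-(3:ℝ)/2) ≤ Y n (n - k) o}).toReal
          ≤ C * Real.exp (-(3/2) * a ^ 2)) ∧
      (∀ n k : ℕ, ∀ a : ℝ, 1 ≤ n → k ≤ n - 1 → 0 < a → a ≤ (k : ℝ) ^ ((1:ℝ)/6) →
        ((ℙ : Measure (Ω n)) {o | Y n (n - k) o ≤ (∫ o', Y n (n - k) o' ∂(ℙ : Measure (Ω n)))
            - a * ((k : ℝ) + 1/2) ^ (-(3:ℝ)/2)}).toReal
          ≤ C * Real.exp (-(3/2) * a ^ 2)) ∧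
      (∀ n k : ℕ, ∀ a : ℝ, 1 ≤ k → k ≤ n → 0 < a → a ≤ ((n - k : ℕ) : ℝ) ^ ((1:ℝ)/6) →
        ((ℙ : Measure (Ω n)) {o | (2 : ℝ) ^ ((3:ℝ)/2) * a * ((n - k + 1 : ℕ) : ℝ) ^ (-(3:ℝ)/2)
            ≤ |Y n k o - ∫ o', Y n k o' ∂(ℙ : Measure (Ω n))|}).toReal
          ≤ 2 * C * Real.exp (-(3/2) * a ^ 2)) := by
  have tails (n k : ℕ) a (hk : k < n) (ha : 0 < a) (ha6 : a ≤ (k : ℝ) ^ ((1 : ℝ) / 6)) :=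
    tails_sum_Icc_of_rates_sq (hXmeas n) (hXindep n) (hXlaw n) hk ha ha6
  refine ⟨exp 18, exp_pos 18, fun n k a hn hk ha ha6 => ?_, fun n k a hn hk ha ha6 => ?_,
    fun n k a hk hkn ha ha6 => ?_⟩
  · simpa only [hY, ← measureReal_def] using (tails n k a (by omega) ha ha6).1
  · simpa only [hY, ← measureReal_def] using (tails n k a (by omega) ha ha6).2
  have := hprob n
  obtain ⟨hupper, hlower⟩ := tails n (n - k) a (by omega) ha ha6
  rw [Nat.sub_sub_self hkn] at hupper hlower
  have hδ : a * (((n - k : ℕ) : ℝ) + 1 / 2) ^ (-(3 : ℝ) / 2)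
      ≤ (2 : ℝ) ^ ((3 : ℝ) / 2) * a * ((n - k + 1 : ℕ) : ℝ) ^ (-(3 : ℝ) / 2) := by
    have h := rpow_neg_le_two_rpow_mul_rpow_neg (x := ((n - k : ℕ) : ℝ) + 1 / 2)
      (y := ((n - k + 1 : ℕ) : ℝ)) (p := 3 / 2) (by positivity) (by push_cast; linarith)
      (by norm_num)
    rw [neg_div]
    nlinarith
  simp only [hY]
  refine (measureReal_le_abs_sub_le hδ).trans ?_
  linarith

/-- Lemma: concentration of `Y_k` around its mean.
There is a constant `C > 0` such that for all `n ≥ 1`, `0 ≤ k ≤ n − 1` and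
`0 < a ≤ k^{1/6}`:
`P(Y_{n−k} ≥ E Y_{n−k} + a (k + 1/2)^{−3/2}) ≤ C e^{−(3/2)a²}` and
`P(Y_{n−k} ≤ E Y_{n−k} − a (k + 1/2)^{−3/2}) ≤ C e^{−(3/2)a²}`; consequently, for
`1 ≤ k ≤ n` and `0 < a ≤ (n − k)^{1/6}`,
`P(|Y_k − E Y_k| ≥ 2^{3/2} a (n − k + 1)^{−3/2}) ≤ 2C e^{−(3/2)a²}`. -/
theorem stmt_6
    (d : ℝ) (hd : 0 < d)
    (Ω : ℕ → Type) [∀ n, MeasureSpace (Ω n)]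
    (hprob : ∀ n, IsProbabilityMeasure (ℙ : Measure (Ω n)))
    (X : (n : ℕ) → ℕ → Ω n → ℝ)
    (hXmeas : ∀ n i, Measurable (X n i))
    (hXindep : ∀ n, iIndepFun (fun i : Fin n => X n (i + 1)) ℙ)
    (hXlaw : ∀ n i, 1 ≤ i → i ≤ n →
      Measure.map (X n i) ℙ = expMeasure (((n - i + 1 : ℕ) : ℝ) ^ 2))
    (Y : (n : ℕ) → ℕ → Ω n → ℝ)
    (hY : ∀ n k o, Y n k o = ∑ i ∈ Finset.Icc 1 k, X n i o) :
    ∃ C : ℝ, 0 < C ∧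
      (∀ n k : ℕ, ∀ a : ℝ, 1 ≤ n → k ≤ n - 1 → 0 < a → a ≤ (k : ℝ) ^ ((1:ℝ)/6) →
        ((ℙ : Measure (Ω n)) {o | (∫ o', Y n (n - k) o' ∂(ℙ : Measure (Ω n)))
            + a * ((k : ℝ) + 1/2) ^ (-(3:ℝ)/2) ≤ Y n (n - k) o}).toReal
          ≤ C * Real.exp (-(3/2) * a ^ 2)) ∧
      (∀ n k : ℕ, ∀ a : ℝ, 1 ≤ n → k ≤ n - 1 → 0 < a → a ≤ (k : ℝ) ^ ((1:ℝ)/6) →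
        ((ℙ : Measure (Ω n)) {o | Y n (n - k) o ≤ (∫ o', Y n (n - k) o' ∂(ℙ : Measure (Ω n)))
            - a * ((k : ℝ) + 1/2) ^ (-(3:ℝ)/2)}).toReal
          ≤ C * Real.exp (-(3/2) * a ^ 2)) ∧
      (∀ n k : ℕ, ∀ a : ℝ, 1 ≤ k → k ≤ n → 0 < a → a ≤ ((n - k : ℕ) : ℝ) ^ ((1:ℝ)/6) →
        ((ℙ : Measure (Ω n)) {o | (2 : ℝ) ^ ((3:ℝ)/2) * a * ((n - k + 1 : ℕ) : ℝ) ^ (-(3:ℝ)/2)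
            ≤ |Y n k o - ∫ o', Y n k o' ∂(ℙ : Measure (Ω n))|}).toReal
          ≤ 2 * C * Real.exp (-(3/2) * a ^ 2)) :=
  stmt_6_general Ω hprob X hXmeas hXindep hXlaw Y hY
end

section
/- Let d > 1. Then Var(W_{n,1})/n^{1−2/d} → 0 as n → ∞, where W_{n,1} = ∑_{k=1}^{λ_n−1} Y_k^{1/d}. -/
open MeasureTheory ProbabilityTheory Filter Real
open scoped ProbabilityTheory ENNReal

/-!
Bound the variance by the second moment. With `Z = ∑_{i<λ} |X_i|` every partial sum `Y_k`,
`k < λ`, is at most `Z` in absolute value, so `W_{n,1}² ≤ λ² (Z²)^{1/d}`, and Jensen's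
inequality for the concave map `t ↦ t^{1/d}` gives `E W_{n,1}² ≤ λ² (E Z²)^{1/d}`.
Eventually `2λ_n ≤ n`, so each `X_i` with `i < λ_n` has rate at least `(n/2)²` and
`E X_i² ≤ 32/n⁴`; by Cauchy–Schwarz `E Z² ≤ 32 λ²/n⁴`. Hence
`Var(W_{n,1}) ≤ 32^{1/d} λ^{2+2/d} n^{-4/d} = n^{1-2/d} · O(n^{(2α(d+1)-1)/d})`, and the exponent
is negative because `α < 1/(2(d+1))`.
-/

lemma two_div_sq_sq_le {n m i : ℕ} (hi : i ∈ Finset.Icc 1 m) (hmn : 2 * m ≤ n) :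
    2 / ((((n - i + 1 : ℕ) : ℝ) ^ 2) ^ 2) ≤ 32 / (n : ℝ) ^ 4 := by
  obtain ⟨hi₁, him⟩ := Finset.mem_Icc.1 hi
  have hn : (0 : ℝ) < n := by norm_cast; omega
  have : (n : ℝ) / 2 ≤ ((n - i + 1 : ℕ) : ℝ) := by
    rw [Nat.cast_add, Nat.cast_sub (by omega)]
    have : 2 * (i : ℝ) ≤ n := by norm_cast; omega
    push_cast; linarith
  calc 2 / ((((n - i + 1 : ℕ) : ℝ) ^ 2) ^ 2) ≤ 2 / ((n / 2) ^ 2) ^ 2 := by gcongr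
    _ = 32 / (n : ℝ) ^ 4 := by field_simp; norm_num

lemma natCast_ceil_sub_one_le {x : ℝ} (hx : 0 ≤ x) : ((⌈x⌉₊ - 1 : ℕ) : ℝ) ≤ x := by
  rcases Nat.eq_zero_or_pos ⌈x⌉₊ with h | h
  · simpa [h] using hx
  · rw [Nat.cast_sub h, Nat.cast_one, sub_le_iff_le_add]
    exact (Nat.ceil_lt_add_one hx).le

lemma eventually_ceil_rpow_sub_one_le {e : ℝ} (he : e < 1) :
    ∀ᶠ n : ℕ in atTop,
      ((⌈(n : ℝ) ^ e⌉₊ - 1 : ℕ) : ℝ) ≤ (n : ℝ) ^ e ∧ 2 * (⌈(n : ℝ) ^ e⌉₊ - 1) ≤ n := by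
  filter_upwards [((tendsto_rpow_atTop (sub_pos.2 he)).comp
    tendsto_natCast_atTop_atTop).eventually_ge_atTop 2, eventually_gt_atTop 0] with n hn hn₀
  have hn₀ : (0 : ℝ) < n := by exact_mod_cast hn₀
  have hm := natCast_ceil_sub_one_le (rpow_nonneg hn₀.le e)
  refine ⟨hm, ?_⟩
  suffices 2 * ((⌈(n : ℝ) ^ e⌉₊ - 1 : ℕ) : ℝ) ≤ n by exact_mod_cast this
  calc 2 * ((⌈(n : ℝ) ^ e⌉₊ - 1 : ℕ) : ℝ) ≤ (n : ℝ) ^ (1 - e) * (n : ℝ) ^ e := by gcongr; exact hn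
    _ = n := by rw [← rpow_add hn₀]; simp

lemma sq_mul_rpow_div_le {M x c e p : ℝ} (hM : 0 ≤ M) (hMx : M ≤ x ^ e) (hx : 0 < x)
    (hc : 0 ≤ c) (hp : 0 ≤ p) :
    M ^ 2 * (M ^ 2 * (c / x ^ 4)) ^ p / x ^ (1 - 2 * p)
      ≤ c ^ p * x ^ ((2 + 2 * p) * e - 2 * p - 1) :=
  calc M ^ 2 * (M ^ 2 * (c / x ^ 4)) ^ p / x ^ (1 - 2 * p)
      ≤ (x ^ e) ^ 2 * ((x ^ e) ^ 2 * (c / x ^ 4)) ^ p / x ^ (1 - 2 * p) := by gcongr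
    _ = c ^ p * x ^ ((2 + 2 * p) * e - 2 * p - 1) := by
        rw [show x ^ 4 = x ^ (4 : ℝ) by norm_cast, ← rpow_natCast, ← rpow_mul hx.le,
          mul_rpow (by positivity) (by positivity), div_rpow hc (by positivity), ← rpow_mul hx.le,
          ← rpow_mul hx.le, show (2 + 2 * p) * e - 2 * p - 1
            = e * (2 : ℕ) + e * (2 : ℕ) * p - 4 * p - (1 - 2 * p) by push_cast; ring,
          rpow_sub hx _ (1 - 2 * p), rpow_sub hx _ (4 * p), rpow_add hx]
        ring

lemma rpow_le_one_add {x p : ℝ} (hx : 0 ≤ x) (hp₀ : 0 ≤ p) (hp₁ : p ≤ 1) : x ^ p ≤ 1 + x := by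
  rcases le_total x 1 with h | h
  · linarith [rpow_le_one hx h hp₀]
  · linarith [rpow_le_self_of_one_le h hp₁]

open Finset in
lemma abs_sum_rpow_partialSums_le (x : ℕ → ℝ) (m : ℕ) {p : ℝ} (hp₀ : 0 ≤ p) :
    |∑ k ∈ Icc 1 m, (∑ i ∈ Icc 1 k, x i) ^ p| ≤ m * (∑ i ∈ Icc 1 m, |x i|) ^ p :=
  calc |∑ k ∈ Icc 1 m, (∑ i ∈ Icc 1 k, x i) ^ p|
      ≤ ∑ k ∈ Icc 1 m, |∑ i ∈ Icc 1 k, x i| ^ p :=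
        (abs_sum_le_sum_abs _ _).trans (sum_le_sum fun _ _ => abs_rpow_le_abs_rpow _ _)
    _ ≤ ∑ _k ∈ Icc 1 m, (∑ i ∈ Icc 1 m, |x i|) ^ p := by
        gcongr with k hk
        exact (abs_sum_le_sum_abs _ _).trans <| sum_le_sum_of_subset_of_nonneg
          (Icc_subset_Icc_right (mem_Icc.1 hk).2) fun _ _ _ => abs_nonneg _
    _ = m * (∑ i ∈ Icc 1 m, |x i|) ^ p := by simp

namespace ProbabilityTheory

lemma expMeasure_eq_withDensity (r : ℝ) :
    expMeasure r = volume.withDensity (exponentialPDF r) := rfl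

-- The exponent `3 - 1` is the shape expected by `integral_rpow_mul_exp_neg_mul_Ioi`.
lemma toReal_exponentialPDF_smul_sq {r : ℝ} (hr : 0 < r) (x : ℝ) :
    (exponentialPDF r x).toReal • x ^ 2
      = (Set.Ioi 0).indicator (fun t => r * (t ^ ((3 : ℝ) - 1) * exp (-(r * t)))) x := by
  rcases lt_trichotomy x 0 with hx | rfl | hx
  · simp [exponentialPDF_of_neg hx, hx.not_gt]
  · simp
  · rw [exponentialPDF_of_nonneg hx.le, ENNReal.toReal_ofReal (by positivity),
      Set.indicator_of_mem (Set.mem_Ioi.2 hx), smul_eq_mul]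
    norm_num [rpow_two]
    ring

lemma integrable_sq_expMeasure {r : ℝ} (hr : 0 < r) :
    Integrable (fun x : ℝ => x ^ 2) (expMeasure r) := by
  rw [expMeasure_eq_withDensity, integrable_withDensity_iff_integrable_smul' (f := exponentialPDF r)
    (measurable_exponentialPDFReal r).ennreal_ofReal (ae_of_all _ fun _ => ENNReal.ofReal_lt_top)]
  simp_rw [toReal_exponentialPDF_smul_sq hr]
  rw [integrable_indicator_iff measurableSet_Ioi]
  refine Integrable.const_mul ?_ r
  simpa only [IntegrableOn, rpow_one, neg_mul] using
    integrableOn_rpow_mul_exp_neg_mul_rpow (s := 3 - 1) (by norm_num) one_pos hr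

lemma integral_sq_expMeasure {r : ℝ} (hr : 0 < r) :
    ∫ x, x ^ 2 ∂expMeasure r = 2 / r ^ 2 := by
  rw [expMeasure_eq_withDensity,
    integral_withDensity_eq_integral_toReal_smul (f := exponentialPDF r)
      (measurable_exponentialPDFReal r).ennreal_ofReal (ae_of_all _ fun _ => ENNReal.ofReal_lt_top)]
  simp_rw [toReal_exponentialPDF_smul_sq hr]
  rw [integral_indicator measurableSet_Ioi, integral_const_mul,
    integral_rpow_mul_exp_neg_mul_Ioi (by norm_num) hr,
    show (3 : ℝ) = (2 : ℕ) + 1 by norm_num, Gamma_nat_eq_factorial, rpow_add_one (by positivity)]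
  norm_num
  field_simp

section Moments

variable {Ω : Type*} {mΩ : MeasurableSpace Ω} {μ : Measure Ω}

open Finset

lemma memLp_two_of_map_eq_expMeasure {X : Ω → ℝ} (hX : AEMeasurable X μ) {r : ℝ} (hr : 0 < r)
    (hlaw : μ.map X = expMeasure r) : MemLp X 2 μ := by
  have : MemLp id 2 (μ.map X) := by
    rw [hlaw, memLp_two_iff_integrable_sq aestronglyMeasurable_id]
    exact integrable_sq_expMeasure hr
  exact (memLp_map_measure_iff aestronglyMeasurable_id hX).1 this

lemma integral_sq_of_map_eq_expMeasure {X : Ω → ℝ} (hX : AEMeasurable X μ) {r : ℝ} (hr : 0 < r)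
    (hlaw : μ.map X = expMeasure r) : ∫ ω, X ω ^ 2 ∂μ = 2 / r ^ 2 := by
  rw [← integral_sq_expMeasure hr, ← hlaw,
    integral_map hX (continuous_pow 2).aestronglyMeasurable]

lemma integrable_rpow_of_nonneg [IsFiniteMeasure μ] {f : Ω → ℝ} (hf₀ : 0 ≤ᵐ[μ] f)
    (hf : Integrable f μ) {p : ℝ} (hp₀ : 0 ≤ p) (hp₁ : p ≤ 1) :
    Integrable (fun ω => f ω ^ p) μ := by
  refine ((integrable_const 1).add hf).mono'
    ((continuous_rpow_const hp₀).comp_aestronglyMeasurable hf.aestronglyMeasurable) ?_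
  filter_upwards [hf₀] with ω hω
  rw [norm_of_nonneg (rpow_nonneg hω p)]
  exact rpow_le_one_add hω hp₀ hp₁

lemma integral_rpow_le_rpow_integral [IsProbabilityMeasure μ] {f : Ω → ℝ} (hf₀ : 0 ≤ᵐ[μ] f)
    (hf : Integrable f μ) {p : ℝ} (hp₀ : 0 ≤ p) (hp₁ : p ≤ 1) :
    ∫ ω, f ω ^ p ∂μ ≤ (∫ ω, f ω ∂μ) ^ p :=
  (concaveOn_rpow hp₀ hp₁).le_map_integral (continuous_rpow_const hp₀).continuousOn isClosed_Ici
    hf₀ hf (integrable_rpow_of_nonneg hf₀ hf hp₀ hp₁)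

lemma integral_sq_sum_abs_le {ι : Type*} (s : Finset ι) {X : ι → Ω → ℝ}
    (hX : ∀ i ∈ s, MemLp (X i) 2 μ) {σ : ℝ} (hσ : ∀ i ∈ s, ∫ ω, X i ω ^ 2 ∂μ ≤ σ) :
    ∫ ω, (∑ i ∈ s, |X i ω|) ^ 2 ∂μ ≤ #s ^ 2 * σ := by
  have hsq : ∀ i ∈ s, Integrable (fun ω => X i ω ^ 2) μ := fun i hi => (hX i hi).integrable_sq
  calc ∫ ω, (∑ i ∈ s, |X i ω|) ^ 2 ∂μ ≤ ∫ ω, #s * ∑ i ∈ s, X i ω ^ 2 ∂μ :=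
        integral_mono_of_nonneg (ae_of_all _ fun _ => sq_nonneg _)
          ((integrable_finsetSum s hsq).const_mul _) (ae_of_all _ fun ω => by
            simpa only [sq_abs] using sq_sum_le_card_mul_sum_sq (s := s) (f := fun i => |X i ω|))
    _ = #s * ∑ i ∈ s, ∫ ω, X i ω ^ 2 ∂μ := by rw [integral_const_mul, integral_finsetSum s hsq]
    _ ≤ #s * ∑ i ∈ s, σ := by gcongr with i hi; exact hσ i hi
    _ = #s ^ 2 * σ := by rw [sum_const, nsmul_eq_mul]; ring

lemma variance_sum_rpow_partialSums_le [IsProbabilityMeasure μ] {X : ℕ → Ω → ℝ} {m : ℕ}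
    (hX : ∀ i ∈ Icc 1 m, MemLp (X i) 2 μ) {σ : ℝ} (hσ : ∀ i ∈ Icc 1 m, ∫ ω, X i ω ^ 2 ∂μ ≤ σ)
    {p : ℝ} (hp₀ : 0 ≤ p) (hp₁ : p ≤ 1) :
    variance (fun ω => ∑ k ∈ Icc 1 m, (∑ i ∈ Icc 1 k, X i ω) ^ p) μ
      ≤ m ^ 2 * (m ^ 2 * σ) ^ p := by
  set Z : Ω → ℝ := fun ω => ∑ i ∈ Icc 1 m, |X i ω|
  have hZ₀ : ∀ ω, 0 ≤ Z ω ^ 2 := fun ω => sq_nonneg _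
  have hZ : Integrable (fun ω => Z ω ^ 2) μ :=
    (memLp_finsetSum _ fun i hi => (hX i hi).abs).integrable_sq
  have hW : AEStronglyMeasurable (fun ω => ∑ k ∈ Icc 1 m, (∑ i ∈ Icc 1 k, X i ω) ^ p) μ :=
    Finset.aestronglyMeasurable_fun_sum _ fun k hk =>
      (continuous_rpow_const hp₀).comp_aestronglyMeasurable <|
        Finset.aestronglyMeasurable_fun_sum _ fun i hi => (hX i <| Icc_subset_Icc_right
          (mem_Icc.1 hk).2 hi).aestronglyMeasurable
  have hWZ : ∀ ω, (∑ k ∈ Icc 1 m, (∑ i ∈ Icc 1 k, X i ω) ^ p) ^ 2 ≤ m ^ 2 * (Z ω ^ 2) ^ p := by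
    intro ω
    rw [← sq_abs, ← rpow_pow_comm (sum_nonneg fun i _ => abs_nonneg _), ← mul_pow]
    gcongr
    exact abs_sum_rpow_partialSums_le (X · ω) m hp₀
  calc _ ≤ ∫ ω, (∑ k ∈ Icc 1 m, (∑ i ∈ Icc 1 k, X i ω) ^ p) ^ 2 ∂μ :=
        variance_le_expectation_sq hW
    _ ≤ ∫ ω, m ^ 2 * (Z ω ^ 2) ^ p ∂μ :=
        integral_mono_of_nonneg (ae_of_all _ fun _ => sq_nonneg _)
          ((integrable_rpow_of_nonneg (ae_of_all _ hZ₀) hZ hp₀ hp₁).const_mul _) (ae_of_all _ hWZ)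
    _ = m ^ 2 * ∫ ω, (Z ω ^ 2) ^ p ∂μ := integral_const_mul _ _
    _ ≤ m ^ 2 * (∫ ω, Z ω ^ 2 ∂μ) ^ p := by
        gcongr
        exact integral_rpow_le_rpow_integral (ae_of_all _ hZ₀) hZ hp₀ hp₁
    _ ≤ m ^ 2 * (m ^ 2 * σ) ^ p := by
        gcongr
        simpa using integral_sq_sum_abs_le (Icc 1 m) hX hσ

lemma variance_sum_rpow_partialSums_le_of_map_eq_expMeasure [IsProbabilityMeasure μ] {n m : ℕ}
    (hmn : 2 * m ≤ n) {X : ℕ → Ω → ℝ} (hX : ∀ i, AEMeasurable (X i) μ)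
    (hlaw : ∀ i, 1 ≤ i → i ≤ n → μ.map (X i) = expMeasure (((n - i + 1 : ℕ) : ℝ) ^ 2))
    {p : ℝ} (hp₀ : 0 ≤ p) (hp₁ : p ≤ 1) :
    variance (fun ω => ∑ k ∈ Icc 1 m, (∑ i ∈ Icc 1 k, X i ω) ^ p) μ
      ≤ m ^ 2 * (m ^ 2 * (32 / (n : ℝ) ^ 4)) ^ p := by
  have hlaw' : ∀ i ∈ Icc 1 m, μ.map (X i) = expMeasure (((n - i + 1 : ℕ) : ℝ) ^ 2) :=
    fun i hi => hlaw i (mem_Icc.1 hi).1 (by have := (mem_Icc.1 hi).2; omega)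
  refine variance_sum_rpow_partialSums_le
    (fun i hi => memLp_two_of_map_eq_expMeasure (hX i) (by positivity) (hlaw' i hi))
    (fun i hi => ?_) hp₀ hp₁
  rw [integral_sq_of_map_eq_expMeasure (hX i) (by positivity) (hlaw' i hi)]
  exact two_div_sq_sq_le hi hmn

end Moments

end ProbabilityTheory

theorem stmt_14_general
    (d : ℝ) (hd : 1 < d)
    (α : ℝ) (hα' : α < 1 / (2 * (d + 1)))
    (Ω : ℕ → Type) [∀ n, MeasureSpace (Ω n)]
    (hprob : ∀ n, IsProbabilityMeasure (ℙ : Measure (Ω n)))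
    (X : (n : ℕ) → ℕ → Ω n → ℝ)
    (hXmeas : ∀ n i, Measurable (X n i))
    (hXlaw : ∀ n i, 1 ≤ i → i ≤ n →
      Measure.map (X n i) ℙ = expMeasure (((n - i + 1 : ℕ) : ℝ) ^ 2))
    (Y : (n : ℕ) → ℕ → Ω n → ℝ)
    (hY : ∀ n k o, Y n k o = ∑ i ∈ Finset.Icc 1 k, X n i o)
    (lam : ℕ → ℕ) (hlam : ∀ n, lam n = ⌈(n : ℝ) ^ ((1:ℝ)/2 + α)⌉₊)
    (W1 : (n : ℕ) → Ω n → ℝ)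
    (hW1 : ∀ n o, W1 n o = ∑ k ∈ Finset.Icc 1 (lam n - 1), (Y n k o) ^ (1/d)) :
    Tendsto (fun n : ℕ => variance (W1 n) (ℙ : Measure (Ω n)) / (n : ℝ) ^ (1 - 2/d))
      atTop (nhds 0) := by
  have hd₀ : 0 < d := by linarith
  have hp : 0 ≤ 1 / d ∧ 1 / d ≤ 1 := ⟨by positivity, (div_le_one hd₀).2 hd.le⟩
  set κ : ℝ := (2 + 2 * (1 / d)) * (1 / 2 + α) - 2 * (1 / d) - 1
  have hα₂ : α * (2 * (d + 1)) < 1 := (lt_div_iff₀ (by positivity)).1 hα'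
  have hκ : κ < 0 := by
    rw [show κ = (2 * α * (d + 1) - 1) / d by simp only [κ]; field_simp; ring]
    exact div_neg_of_neg_of_pos (by linarith) hd₀
  have hbound : Tendsto (fun n : ℕ => 32 ^ (1 / d) * (n : ℝ) ^ κ) atTop (nhds 0) := by
    simpa using ((tendsto_rpow_neg_atTop (neg_pos.2 hκ)).comp
      tendsto_natCast_atTop_atTop).const_mul (32 ^ (1 / d))
  refine squeeze_zero' (Eventually.of_forall fun n =>
    div_nonneg (variance_nonneg _ _) (rpow_nonneg (Nat.cast_nonneg n) _)) ?_ hbound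
  filter_upwards [eventually_ceil_rpow_sub_one_le (show 1 / 2 + α < 1 by nlinarith),
    eventually_gt_atTop 0] with n ⟨hm, hmn⟩ hn₀
  have := hprob n
  have hW : W1 n = fun o =>
      ∑ k ∈ Finset.Icc 1 (lam n - 1), (∑ i ∈ Finset.Icc 1 k, X n i o) ^ (1 / d) :=
    funext fun o => by simp only [hW1, hY]
  rw [hW, hlam n, show (1 : ℝ) - 2 / d = 1 - 2 * (1 / d) by ring]
  calc _ ≤ _ := div_le_div_of_nonneg_right (variance_sum_rpow_partialSums_le_of_map_eq_expMeasure
        hmn (fun i => (hXmeas n i).aemeasurable) (hXlaw n) hp.1 hp.2) (by positivity)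
    _ ≤ _ := sq_mul_rpow_div_le (Nat.cast_nonneg _) hm (by exact_mod_cast hn₀) (by norm_num) hp.1

/-- Lemma: `Var(W_{n,1}) = o(n^{1−2/d})`.
Let `d > 1`, `0 < α < 1/(2(d+1))`, `λ_n = ⌈n^{1/2+α}⌉` and
`W_{n,1} = ∑_{k=1}^{λ_n−1} Y_k^{1/d}`.  Then `Var(W_{n,1})/n^{1−2/d} → 0`. -/
theorem stmt_14
    (d : ℝ) (hd : 1 < d)
    (α : ℝ) (hα : 0 < α) (hα' : α < 1 / (2 * (d + 1)))
    (Ω : ℕ → Type) [∀ n, MeasureSpace (Ω n)]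
    (hprob : ∀ n, IsProbabilityMeasure (ℙ : Measure (Ω n)))
    (X : (n : ℕ) → ℕ → Ω n → ℝ)
    (hXmeas : ∀ n i, Measurable (X n i))
    (hXindep : ∀ n, iIndepFun (fun i : Fin n => X n (i + 1)) ℙ)
    (hXlaw : ∀ n i, 1 ≤ i → i ≤ n →
      Measure.map (X n i) ℙ = expMeasure (((n - i + 1 : ℕ) : ℝ) ^ 2))
    (Y : (n : ℕ) → ℕ → Ω n → ℝ)
    (hY : ∀ n k o, Y n k o = ∑ i ∈ Finset.Icc 1 k, X n i o)
    (lam : ℕ → ℕ) (hlam : ∀ n, lam n = ⌈(n : ℝ) ^ ((1:ℝ)/2 + α)⌉₊)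
    (W1 : (n : ℕ) → Ω n → ℝ)
    (hW1 : ∀ n o, W1 n o = ∑ k ∈ Finset.Icc 1 (lam n - 1), (Y n k o) ^ (1/d)) :
    Tendsto (fun n : ℕ => variance (W1 n) (ℙ : Measure (Ω n)) / (n : ℝ) ^ (1 - 2/d))
      atTop (nhds 0) :=
  stmt_14_general d hd α hα' Ω hprob X hXmeas hXlaw Y hY lam hlam W1 hW1
end
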